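/- Let S ⊆ ℝ² be open, and let u, v: S → ℝ be continuous functions which are differentiable except possibly at points (x,0) ∈ S with v(x,0) = 0, and which satisfy ∂u/∂x = ∂v/∂y and ∂v/∂x = −2(v² + y²)^{1/2} ∂u/∂y wherever they are differentiable. Define D = {(z₁,z₂,z₃) ∈ ℂ³ : (Re z₃, Im(z₁z₂)) ∈ S} and H: D → ℝ³ by H(z) = (Re(z₁z₂) − v(Re z₃, Im(z₁z₂)), Im z₃ − u(Re z₃, Im(z₁z₂)), |z₁|² − |z₂|²), and set N = H^{-1}(0). Then: (i) the points of N with z₁ = z₂ = 0 are exactly the points (0, 0, x + i u(x,0)) for (x,0) ∈ S with v(x,0) = 0; (ii) at every z ∈ N with (z₁,z₂) ≠ (0,0), H is differentiable at z with dH_z surjective, and ker(dH_z) is a special Lagrangian 3-plane (ω and Im Ω vanish on it). Hence N is a special Lagrangian 3-fold in ℂ³, possibly with singular points of the form (0,0,z₃). -/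

import Mathlib

open scoped BigOperators ComplexConjugate

noncomputable section

/-- The Kähler form on `ℂ³`. -/
def wC (u v : Fin 3 → ℂ) : ℝ := (∑ j, conj (u j) * v j).im

/-- The holomorphic volume form `Ω = dz₁∧dz₂∧dz₃` on `ℂ³`. -/
def OmC (v : Fin 3 → (Fin 3 → ℂ)) : ℂ :=
  Matrix.det (Matrix.of fun i j => v j i)

/-- The local coordinates `(x,y) = (Re z₃, Im(z₁z₂))`. -/
def pr14 (z : Fin 3 → ℂ) : ℝ × ℝ := ((z 2).re, (z 0 * z 1).im)

/-- The defining map of the `U(1)`-invariant `3`-fold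
`N = {z : z₁z₂ = v(x,y) + iy, z₃ = x + iu(x,y), |z₁|² = |z₂|²}` (the case `a = 0`),
as the zero set `H⁻¹(0)`. -/
def H14 (u v : ℝ × ℝ → ℝ) (z : Fin 3 → ℂ) : Fin 3 → ℝ :=
  ![(z 0 * z 1).re - v (pr14 z),
    (z 2).im - u (pr14 z),
    Complex.normSq (z 0) - Complex.normSq (z 1)]

set_option maxHeartbeats 4000000

def Mder (z : Fin 3 → ℂ) : (Fin 3 → ℂ) →L[ℝ] ℂ :=
  z 0 • (ContinuousLinearMap.proj (R := ℝ) (φ := fun _ : Fin 3 => ℂ) 1)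
    + z 1 • (ContinuousLinearMap.proj (R := ℝ) (φ := fun _ : Fin 3 => ℂ) 0)
lemma hasMder (z : Fin 3 → ℂ) : HasFDerivAt (fun w : Fin 3 → ℂ => w 0 * w 1) (Mder z) z :=
  (hasFDerivAt_apply 0 z).mul (hasFDerivAt_apply 1 z)
def Pder (z : Fin 3 → ℂ) : (Fin 3 → ℂ) →L[ℝ] ℝ × ℝ :=
  (Complex.reCLM.comp (ContinuousLinearMap.proj (R := ℝ) (φ := fun _ : Fin 3 => ℂ) 2)).prod
    (Complex.imCLM.comp (Mder z))
lemma hasPder (z : Fin 3 → ℂ) : HasFDerivAt pr14 (Pder z) z :=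
  HasFDerivAt.prodMk (Complex.reCLM.hasFDerivAt.comp z (hasFDerivAt_apply 2 z))
    (Complex.imCLM.hasFDerivAt.comp z (hasMder z))
def Nder (z : Fin 3 → ℂ) (i : Fin 3) : (Fin 3 → ℂ) →L[ℝ] ℝ :=
  Complex.reCLM.comp
    ((z i • ((Complex.conjCLE.toContinuousLinearMap).comp (ContinuousLinearMap.proj (R := ℝ) (φ := fun _ : Fin 3 => ℂ) i))
      + (starRingEnd ℂ (z i)) • (ContinuousLinearMap.proj (R := ℝ) (φ := fun _ : Fin 3 => ℂ) i)))
lemma hasNder (z : Fin 3 → ℂ) (i : Fin 3) :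
    HasFDerivAt (fun w : Fin 3 → ℂ => Complex.normSq (w i)) (Nder z i) z := by
  have h1 : HasFDerivAt (fun w : Fin 3 → ℂ => w i * starRingEnd ℂ (w i))
      (z i • ((Complex.conjCLE.toContinuousLinearMap).comp (ContinuousLinearMap.proj (R := ℝ) (φ := fun _ : Fin 3 => ℂ) i))
        + (starRingEnd ℂ (z i)) • (ContinuousLinearMap.proj (R := ℝ) (φ := fun _ : Fin 3 => ℂ) i)) z :=
    (hasFDerivAt_apply i z).mul
      ((Complex.conjCLE.toContinuousLinearMap.hasFDerivAt).comp z (hasFDerivAt_apply i z))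
  have h2 := Complex.reCLM.hasFDerivAt.comp z h1
  have h3 : (fun w : Fin 3 → ℂ => Complex.reCLM ((fun w : Fin 3 → ℂ => w i * starRingEnd ℂ (w i)) w))
      = fun w : Fin 3 → ℂ => Complex.normSq (w i) := by
    funext w; simp [Complex.mul_conj]
  exact h3 ▸ h2
def Lder (u v : ℝ × ℝ → ℝ) (z : Fin 3 → ℂ) : (Fin 3 → ℂ) →L[ℝ] (Fin 3 → ℝ) :=
  ContinuousLinearMap.pi
    ![Complex.reCLM.comp (Mder z) - (fderiv ℝ v (pr14 z)).comp (Pder z),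
      Complex.imCLM.comp (ContinuousLinearMap.proj (R := ℝ) (φ := fun _ : Fin 3 => ℂ) 2)
        - (fderiv ℝ u (pr14 z)).comp (Pder z),
      Nder z 0 - Nder z 1]
lemma hasLder (u v : ℝ × ℝ → ℝ) (z : Fin 3 → ℂ)
    (hu : DifferentiableAt ℝ u (pr14 z)) (hv : DifferentiableAt ℝ v (pr14 z)) :
    HasFDerivAt (H14 u v) (Lder u v z) z := by
  have key : HasFDerivAt (fun w : Fin 3 → ℂ => fun i : Fin 3 =>
      (![fun w : Fin 3 → ℂ => (w 0 * w 1).re - v (pr14 w),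
        fun w : Fin 3 → ℂ => (w 2).im - u (pr14 w),
        fun w : Fin 3 → ℂ => Complex.normSq (w 0) - Complex.normSq (w 1)] : Fin 3 → _) i w)
      (Lder u v z) z := by
    apply hasFDerivAt_pi.2
    intro i
    fin_cases i
    · exact (Complex.reCLM.hasFDerivAt.comp z (hasMder z)).sub
        ((hv.hasFDerivAt).comp z (hasPder z))
    · exact ((Complex.imCLM.hasFDerivAt.comp z (hasFDerivAt_apply 2 z))).sub
        ((hu.hasFDerivAt).comp z (hasPder z))
    · exact (hasNder z 0).sub (hasNder z 1)
  have h : H14 u v = fun w : Fin 3 → ℂ => fun i : Fin 3 =>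
      (![fun w : Fin 3 → ℂ => (w 0 * w 1).re - v (pr14 w),
        fun w : Fin 3 → ℂ => (w 2).im - u (pr14 w),
        fun w : Fin 3 → ℂ => Complex.normSq (w 0) - Complex.normSq (w 1)] : Fin 3 → _) i w := by
    funext w i; fin_cases i <;> rfl
  rw [h]; exact key
lemma Lder_apply (u v : ℝ × ℝ → ℝ) (z w : Fin 3 → ℂ) :
    Lder u v z w = ![(z 0 * w 1 + z 1 * w 0).re
        - fderiv ℝ v (pr14 z) ((w 2).re, (z 0 * w 1 + z 1 * w 0).im),
      (w 2).im - fderiv ℝ u (pr14 z) ((w 2).re, (z 0 * w 1 + z 1 * w 0).im),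
      (z 0 * (starRingEnd ℂ) (w 0) + (starRingEnd ℂ) (z 0) * w 0).re
        - (z 1 * (starRingEnd ℂ) (w 1) + (starRingEnd ℂ) (z 1) * w 1).re] := by
  funext i
  fin_cases i <;>
    simp [Lder, Mder, Pder, Nder, Complex.smul_re, Complex.smul_im]
lemma lin2 (f : ℝ × ℝ →L[ℝ] ℝ) (x y : ℝ) : f (x, y) = x * f (1, 0) + y * f (0, 1) := by
  have h : (x, y) = x • ((1:ℝ), (0:ℝ)) + y • ((0:ℝ), (1:ℝ)) := by simp [Prod.ext_iff]
  rw [h, map_add, f.map_smul, f.map_smul, smul_eq_mul, smul_eq_mul]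


lemma sl_omega (a1 a2 b1 b2 A B p1 p2 p3 p4 p5 p6 q1 q2 q3 q4 q5 q6 tp dp gp tq dq gq : ℝ)
    (ha : a1^2 + a2^2 ≠ 0)
    (hb : b1^2 + b2^2 = a1^2 + a2^2)
    (hp1 : 2*(a1^2+a2^2)*p1 = (-tp*a2 - 2*(a1^2+a2^2)*gp*A*b1 + dp*(B*b1+b2)))
    (hp2 : 2*(a1^2+a2^2)*p2 = (tp*a1 + 2*(a1^2+a2^2)*gp*A*b2 + dp*(b1-B*b2)))
    (hp3 : 2*(a1^2+a2^2)*p3 = (tp*b2 - 2*(a1^2+a2^2)*gp*A*a1 + dp*(B*a1+a2)))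
    (hp4 : 2*(a1^2+a2^2)*p4 = (-tp*b1 + 2*(a1^2+a2^2)*gp*A*a2 + dp*(a1-B*a2)))
    (hp5 : 2*(a1^2+a2^2)*p5 = (2*(a1^2+a2^2)*gp))
    (hp6 : 2*(a1^2+a2^2)*p6 = (2*(a1^2+a2^2)*(B*gp + A*dp)))
    (hq1 : 2*(a1^2+a2^2)*q1 = (-tq*a2 - 2*(a1^2+a2^2)*gq*A*b1 + dq*(B*b1+b2)))
    (hq2 : 2*(a1^2+a2^2)*q2 = (tq*a1 + 2*(a1^2+a2^2)*gq*A*b2 + dq*(b1-B*b2)))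
    (hq3 : 2*(a1^2+a2^2)*q3 = (tq*b2 - 2*(a1^2+a2^2)*gq*A*a1 + dq*(B*a1+a2)))
    (hq4 : 2*(a1^2+a2^2)*q4 = (-tq*b1 + 2*(a1^2+a2^2)*gq*A*a2 + dq*(a1-B*a2)))
    (hq5 : 2*(a1^2+a2^2)*q5 = (2*(a1^2+a2^2)*gq))
    (hq6 : 2*(a1^2+a2^2)*q6 = (2*(a1^2+a2^2)*(B*gq + A*dq)))
    : p1*q2 - p2*q1 + p3*q4 - p4*q3 + p5*q6 - p6*q5 = 0 := by
  have h2r : (2*(a1^2+a2^2))^2 ≠ 0 := pow_ne_zero _ (mul_ne_zero two_ne_zero ha)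
  have key : (2*(a1^2+a2^2))^2 * (p1*q2 - p2*q1 + p3*q4 - p4*q3 + p5*q6 - p6*q5) = 0 := by
    linear_combination
      ((2*(a1^2+a2^2)*p1))*hq2
      + ((tq*a1 + 2*(a1^2+a2^2)*gq*A*b2 + dq*(b1-B*b2)))*hp1
      + (-(2*(a1^2+a2^2)*p2))*hq1
      + (-(-tq*a2 - 2*(a1^2+a2^2)*gq*A*b1 + dq*(B*b1+b2)))*hp2
      + ((2*(a1^2+a2^2)*p3))*hq4
      + ((-tq*b1 + 2*(a1^2+a2^2)*gq*A*a2 + dq*(a1-B*a2)))*hp3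
      + (-(2*(a1^2+a2^2)*p4))*hq3
      + (-(tq*b2 - 2*(a1^2+a2^2)*gq*A*a1 + dq*(B*a1+a2)))*hp4
      + ((2*(a1^2+a2^2)*p5))*hq6
      + ((2*(a1^2+a2^2)*(B*gq + A*dq)))*hp5
      + (-(2*(a1^2+a2^2)*p6))*hq5
      + (-(2*(a1^2+a2^2)*gq))*hp6
      + (-2*(a1^2+a2^2)*A*(gp*dq - dp*gq))*hb
  rcases mul_eq_zero.mp key with h | h
  · exact absurd h h2r
  · exact h

lemma sl_det (a1 a2 b1 b2 A B p1 p2 p3 p4 p5 p6 q1 q2 q3 q4 q5 q6 s1 s2 s3 s4 s5 s6 tp dp gp tq dq gq ts ds gs : ℝ)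
    (ha : a1^2 + a2^2 ≠ 0)
    (hp1 : 2*(a1^2+a2^2)*p1 = (-tp*a2 - 2*(a1^2+a2^2)*gp*A*b1 + dp*(B*b1+b2)))
    (hp2 : 2*(a1^2+a2^2)*p2 = (tp*a1 + 2*(a1^2+a2^2)*gp*A*b2 + dp*(b1-B*b2)))
    (hp3 : 2*(a1^2+a2^2)*p3 = (tp*b2 - 2*(a1^2+a2^2)*gp*A*a1 + dp*(B*a1+a2)))
    (hp4 : 2*(a1^2+a2^2)*p4 = (-tp*b1 + 2*(a1^2+a2^2)*gp*A*a2 + dp*(a1-B*a2)))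
    (hp5 : 2*(a1^2+a2^2)*p5 = (2*(a1^2+a2^2)*gp))
    (hp6 : 2*(a1^2+a2^2)*p6 = (2*(a1^2+a2^2)*(B*gp + A*dp)))
    (hq1 : 2*(a1^2+a2^2)*q1 = (-tq*a2 - 2*(a1^2+a2^2)*gq*A*b1 + dq*(B*b1+b2)))
    (hq2 : 2*(a1^2+a2^2)*q2 = (tq*a1 + 2*(a1^2+a2^2)*gq*A*b2 + dq*(b1-B*b2)))
    (hq3 : 2*(a1^2+a2^2)*q3 = (tq*b2 - 2*(a1^2+a2^2)*gq*A*a1 + dq*(B*a1+a2)))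
    (hq4 : 2*(a1^2+a2^2)*q4 = (-tq*b1 + 2*(a1^2+a2^2)*gq*A*a2 + dq*(a1-B*a2)))
    (hq5 : 2*(a1^2+a2^2)*q5 = (2*(a1^2+a2^2)*gq))
    (hq6 : 2*(a1^2+a2^2)*q6 = (2*(a1^2+a2^2)*(B*gq + A*dq)))
    (hs1 : 2*(a1^2+a2^2)*s1 = (-ts*a2 - 2*(a1^2+a2^2)*gs*A*b1 + ds*(B*b1+b2)))
    (hs2 : 2*(a1^2+a2^2)*s2 = (ts*a1 + 2*(a1^2+a2^2)*gs*A*b2 + ds*(b1-B*b2)))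
    (hs3 : 2*(a1^2+a2^2)*s3 = (ts*b2 - 2*(a1^2+a2^2)*gs*A*a1 + ds*(B*a1+a2)))
    (hs4 : 2*(a1^2+a2^2)*s4 = (-ts*b1 + 2*(a1^2+a2^2)*gs*A*a2 + ds*(a1-B*a2)))
    (hs5 : 2*(a1^2+a2^2)*s5 = (2*(a1^2+a2^2)*gs))
    (hs6 : 2*(a1^2+a2^2)*s6 = (2*(a1^2+a2^2)*(B*gs + A*ds)))
    : ((((p1)*(((((q3)*(s6) + (q4)*(s5))) - (((q5)*(s4) + (q6)*(s3))))) + (p2)*(((((q3)*(s5) - (q4)*(s6))) - (((q5)*(s3) - (q6)*(s4))))))) - (((q1)*(((((p3)*(s6) + (p4)*(s5))) - (((p5)*(s4) + (p6)*(s3))))) + (q2)*(((((p3)*(s5) - (p4)*(s6))) - (((p5)*(s3) - (p6)*(s4))))))) + (((s1)*(((((p3)*(q6) + (p4)*(q5))) - (((p5)*(q4) + (p6)*(q3))))) + (s2)*(((((p3)*(q5) - (p4)*(q6))) - (((p5)*(q3) - (p6)*(q4)))))))) = 0 := by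
  have h2r : (2:ℝ)*(a1^2+a2^2) ≠ 0 := mul_ne_zero two_ne_zero ha
  have hp1' : p1 = (-tp*a2 - 2*(a1^2+a2^2)*gp*A*b1 + dp*(B*b1+b2)) / (2*(a1^2+a2^2)) := by rw [eq_div_iff h2r]; linear_combination hp1
  have hp2' : p2 = (tp*a1 + 2*(a1^2+a2^2)*gp*A*b2 + dp*(b1-B*b2)) / (2*(a1^2+a2^2)) := by rw [eq_div_iff h2r]; linear_combination hp2
  have hp3' : p3 = (tp*b2 - 2*(a1^2+a2^2)*gp*A*a1 + dp*(B*a1+a2)) / (2*(a1^2+a2^2)) := by rw [eq_div_iff h2r]; linear_combination hp3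
  have hp4' : p4 = (-tp*b1 + 2*(a1^2+a2^2)*gp*A*a2 + dp*(a1-B*a2)) / (2*(a1^2+a2^2)) := by rw [eq_div_iff h2r]; linear_combination hp4
  have hp5' : p5 = (2*(a1^2+a2^2)*gp) / (2*(a1^2+a2^2)) := by rw [eq_div_iff h2r]; linear_combination hp5
  have hp6' : p6 = (2*(a1^2+a2^2)*(B*gp + A*dp)) / (2*(a1^2+a2^2)) := by rw [eq_div_iff h2r]; linear_combination hp6
  have hq1' : q1 = (-tq*a2 - 2*(a1^2+a2^2)*gq*A*b1 + dq*(B*b1+b2)) / (2*(a1^2+a2^2)) := by rw [eq_div_iff h2r]; linear_combination hq1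
  have hq2' : q2 = (tq*a1 + 2*(a1^2+a2^2)*gq*A*b2 + dq*(b1-B*b2)) / (2*(a1^2+a2^2)) := by rw [eq_div_iff h2r]; linear_combination hq2
  have hq3' : q3 = (tq*b2 - 2*(a1^2+a2^2)*gq*A*a1 + dq*(B*a1+a2)) / (2*(a1^2+a2^2)) := by rw [eq_div_iff h2r]; linear_combination hq3
  have hq4' : q4 = (-tq*b1 + 2*(a1^2+a2^2)*gq*A*a2 + dq*(a1-B*a2)) / (2*(a1^2+a2^2)) := by rw [eq_div_iff h2r]; linear_combination hq4
  have hq5' : q5 = (2*(a1^2+a2^2)*gq) / (2*(a1^2+a2^2)) := by rw [eq_div_iff h2r]; linear_combination hq5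
  have hq6' : q6 = (2*(a1^2+a2^2)*(B*gq + A*dq)) / (2*(a1^2+a2^2)) := by rw [eq_div_iff h2r]; linear_combination hq6
  have hs1' : s1 = (-ts*a2 - 2*(a1^2+a2^2)*gs*A*b1 + ds*(B*b1+b2)) / (2*(a1^2+a2^2)) := by rw [eq_div_iff h2r]; linear_combination hs1
  have hs2' : s2 = (ts*a1 + 2*(a1^2+a2^2)*gs*A*b2 + ds*(b1-B*b2)) / (2*(a1^2+a2^2)) := by rw [eq_div_iff h2r]; linear_combination hs2
  have hs3' : s3 = (ts*b2 - 2*(a1^2+a2^2)*gs*A*a1 + ds*(B*a1+a2)) / (2*(a1^2+a2^2)) := by rw [eq_div_iff h2r]; linear_combination hs3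
  have hs4' : s4 = (-ts*b1 + 2*(a1^2+a2^2)*gs*A*a2 + ds*(a1-B*a2)) / (2*(a1^2+a2^2)) := by rw [eq_div_iff h2r]; linear_combination hs4
  have hs5' : s5 = (2*(a1^2+a2^2)*gs) / (2*(a1^2+a2^2)) := by rw [eq_div_iff h2r]; linear_combination hs5
  have hs6' : s6 = (2*(a1^2+a2^2)*(B*gs + A*ds)) / (2*(a1^2+a2^2)) := by rw [eq_div_iff h2r]; linear_combination hs6
  rw [hp1', hp2', hp3', hp4', hp5', hp6', hq1', hq2', hq3', hq4', hq5', hq6', hs1', hs2', hs3', hs4', hs5', hs6']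
  field_simp
  ring

/-- Proposition 8.1(a): let `u,v : S → ℝ` be continuous, differentiable except
possibly at points `(x,0)` with `v(x,0) = 0`, and satisfying
`∂u/∂x = ∂v/∂y`, `∂v/∂x = −2(v²+y²)^{1/2} ∂u/∂y` wherever differentiable.  Then
(i) the points of `N = H⁻¹(0)` with `z₁ = z₂ = 0` are exactly the points
`(0,0,x+iu(x,0))` with `(x,0) ∈ S`, `v(x,0) = 0`; (ii) at every other point of `N`,
`H` is differentiable with surjective derivative whose kernel is a special
Lagrangian `3`-plane.  Hence `N` is a possibly singular SL `3`-fold in `ℂ³`. -/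
theorem stmt14 (S : Set (ℝ × ℝ)) (hS : IsOpen S) (u v : ℝ × ℝ → ℝ)
    (hucont : ContinuousOn u S) (hvcont : ContinuousOn v S)
    (hdiff : ∀ p ∈ S, ¬(p.2 = 0 ∧ v p = 0) →
      DifferentiableAt ℝ u p ∧ DifferentiableAt ℝ v p)
    (hpde : ∀ p ∈ S, DifferentiableAt ℝ u p → DifferentiableAt ℝ v p →
      fderiv ℝ u p (1, 0) = fderiv ℝ v p (0, 1) ∧
      fderiv ℝ v p (1, 0)
        = -2 * Real.sqrt ((v p) ^ 2 + p.2 ^ 2) * fderiv ℝ u p (0, 1)) :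
    ({z : Fin 3 → ℂ | pr14 z ∈ S ∧ H14 u v z = 0 ∧ z 0 = 0 ∧ z 1 = 0} =
      {z : Fin 3 → ℂ | ∃ x : ℝ, (x, (0 : ℝ)) ∈ S ∧ v (x, 0) = 0 ∧
        z = ![0, 0, Complex.ofReal x + Complex.ofReal (u (x, 0)) * Complex.I]}) ∧
    (∀ z : Fin 3 → ℂ, pr14 z ∈ S → H14 u v z = 0 → ¬(z 0 = 0 ∧ z 1 = 0) →
      DifferentiableAt ℝ (H14 u v) z ∧
      Function.Surjective (fderiv ℝ (H14 u v) z) ∧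
      Module.finrank ℝ (LinearMap.ker ((fderiv ℝ (H14 u v) z : (Fin 3 → ℂ) →ₗ[ℝ] (Fin 3 → ℝ)))) = 3 ∧
      (∀ p ∈ LinearMap.ker ((fderiv ℝ (H14 u v) z : (Fin 3 → ℂ) →ₗ[ℝ] (Fin 3 → ℝ))),
        ∀ q ∈ LinearMap.ker ((fderiv ℝ (H14 u v) z : (Fin 3 → ℂ) →ₗ[ℝ] (Fin 3 → ℝ))), wC p q = 0) ∧
      (∀ p ∈ LinearMap.ker ((fderiv ℝ (H14 u v) z : (Fin 3 → ℂ) →ₗ[ℝ] (Fin 3 → ℝ))),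
        ∀ q ∈ LinearMap.ker ((fderiv ℝ (H14 u v) z : (Fin 3 → ℂ) →ₗ[ℝ] (Fin 3 → ℝ))),
        ∀ r ∈ LinearMap.ker ((fderiv ℝ (H14 u v) z : (Fin 3 → ℂ) →ₗ[ℝ] (Fin 3 → ℝ))), (OmC ![p, q, r]).im = 0)) := by
  constructor
  · ext z
    simp only [Set.mem_setOf_eq]
    constructor
    · rintro ⟨hzS, hH, h0, h1⟩
      have hpz : pr14 z = ((z 2).re, 0) := by simp [pr14, h0]
      have e0 := congrFun hH 0
      have e1 := congrFun hH 1
      simp [H14, h0, hpz] at e0 e1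
      refine ⟨(z 2).re, ?_, ?_, ?_⟩
      · rw [← hpz]; exact hzS
      · exact e0
      · funext j
        fin_cases j
        · exact h0
        · exact h1
        · show z 2 = _
          apply Complex.ext <;> simp <;> linarith [e1]
    · rintro ⟨x, hxS, hv0, rfl⟩
      have hpz : pr14 ![0, 0, Complex.ofReal x + Complex.ofReal (u (x, 0)) * Complex.I]
          = (x, 0) := by
        simp [pr14]
      refine ⟨by rw [hpz]; exact hxS, ?_, rfl, rfl⟩
      funext i
      fin_cases i <;> simp [H14, hpz, hv0]
  intro z hzS hzH hz01
  have h2eq : Complex.normSq (z 0) = Complex.normSq (z 1) := by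
    have := congrFun hzH 2
    simp [H14, sub_eq_zero] at this
    exact this
  have hz0 : z 0 ≠ 0 := by
    intro h
    apply hz01
    refine ⟨h, ?_⟩
    have : Complex.normSq (z 1) = 0 := by rw [← h2eq, h]; simp
    exact Complex.normSq_eq_zero.mp this
  have hz1 : z 1 ≠ 0 := by
    intro h
    apply hz01
    refine ⟨?_, h⟩
    have : Complex.normSq (z 0) = 0 := by rw [h2eq, h]; simp
    exact Complex.normSq_eq_zero.mp this
  have hVeq : v (pr14 z) = (z 0 * z 1).re := by
    have := congrFun hzH 0
    simp [H14, sub_eq_zero] at this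
    exact this.symm
  have hUeq : u (pr14 z) = (z 2).im := by
    have := congrFun hzH 1
    simp [H14, sub_eq_zero] at this
    exact this.symm
  have hns : ¬((pr14 z).2 = 0 ∧ v (pr14 z) = 0) := by
    rintro ⟨hy, hv⟩
    rw [hVeq] at hv
    have hyz : (z 0 * z 1).im = 0 := hy
    have : z 0 * z 1 = 0 := by
      apply Complex.ext <;> simp [hv, hyz]
    rcases mul_eq_zero.mp this with h | h
    · exact hz0 h
    · exact hz1 h
  have h2eq' : (z 1).re ^ 2 + (z 1).im ^ 2 = (z 0).re ^ 2 + (z 0).im ^ 2 := by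
    have h := h2eq
    simp only [Complex.normSq_apply] at h
    linear_combination -h
  obtain ⟨hud, hvd⟩ := hdiff _ hzS hns
  obtain ⟨hBeq, hVx⟩ := hpde _ hzS hud hvd
  have hsq : Real.sqrt ((v (pr14 z)) ^ 2 + (pr14 z).2 ^ 2) = Complex.normSq (z 0) := by
    have h1 : (v (pr14 z)) ^ 2 + (pr14 z).2 ^ 2 = (Complex.normSq (z 0)) ^ 2 := by
      rw [hVeq]
      show ((z 0 * z 1).re) ^ 2 + ((z 0 * z 1).im) ^ 2 = _
      have : Complex.normSq (z 0 * z 1) = (z 0 * z 1).re ^ 2 + (z 0 * z 1).im ^ 2 := by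
        rw [Complex.normSq_apply]; ring
      rw [← this, Complex.normSq_mul, ← h2eq]; ring
    rw [h1, Real.sqrt_sq (Complex.normSq_nonneg _)]
  have hVx' : fderiv ℝ v (pr14 z) (1, 0)
      = -2 * Complex.normSq (z 0) * fderiv ℝ u (pr14 z) (0, 1) := by rw [hVx, hsq]
  have hVy : fderiv ℝ v (pr14 z) (0, 1) = fderiv ℝ u (pr14 z) (1, 0) := hBeq.symm
  have hL := hasLder u v z hud hvd
  have hfd : fderiv ℝ (H14 u v) z = Lder u v z := hL.fderiv
  have hane : ((z 0).re)^2 + ((z 0).im)^2 ≠ 0 := by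
    have h := Complex.normSq_pos.mpr hz0
    simp only [Complex.normSq_apply] at h
    nlinarith [h]
  set R : ℝ := Complex.normSq (z 0) with hR
  have hRpos : 0 < R := by
    rw [hR]
    rcases Complex.normSq_pos.mpr hz0 with h
    exact h
  have hRne : R ≠ 0 := ne_of_gt hRpos
  have h2eq'' : (z 1).re ^ 2 + (z 1).im ^ 2 = R := by
    simp only [Complex.normSq_apply] at h2eq ⊢
    linear_combination -h2eq
  have hRR : R = (z 0).re ^ 2 + (z 0).im ^ 2 := by
    rw [hR]; simp only [Complex.normSq_apply]; ring
  have hA : ∀ x y : ℝ, fderiv ℝ v (pr14 z) (x, y)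
      = x * (-2 * R * fderiv ℝ u (pr14 z) (0, 1)) + y * fderiv ℝ u (pr14 z) (1, 0) := by
    intro x y
    rw [lin2, hVx', hVy]
  have hB : ∀ x y : ℝ, fderiv ℝ u (pr14 z) (x, y)
      = x * fderiv ℝ u (pr14 z) (1, 0) + y * fderiv ℝ u (pr14 z) (0, 1) := fun x y => lin2 _ x y
  have hsurj : Function.Surjective ⇑(Lder u v z) := by
    intro t
    set WV : Fin 3 → ℂ := ![(((t 0 / (2 * R ^ 2)) : ℝ) : ℂ) * (((z 0 * z 1).re : ℝ) - ((z 0 * z 1).im : ℝ) * Complex.I) * z 0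
          + (((t 2 / (4 * R)) : ℝ) : ℂ) * z 0,
        (((t 0 / (2 * R ^ 2)) : ℝ) : ℂ) * (((z 0 * z 1).re : ℝ) - ((z 0 * z 1).im : ℝ) * Complex.I) * z 1
          - (((t 2 / (4 * R)) : ℝ) : ℂ) * z 1,
        ((t 1 : ℝ) : ℂ) * Complex.I] with hWV
    have c0 : Lder u v z WV 0 = t 0 := by
        rw [Lder_apply]
        simp only [hWV, Matrix.cons_val_zero, Matrix.cons_val_one, Matrix.head_cons,
          Matrix.cons_val_two, Matrix.tail_cons,
          Complex.add_re, Complex.add_im, Complex.mul_re, Complex.mul_im,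
          Complex.sub_re, Complex.sub_im, Complex.ofReal_re, Complex.ofReal_im,
          Complex.I_re, Complex.I_im]
        rw [hA]
        field_simp
        linear_combination (8*(t 0)*((z 0).re^2+(z 0).im^2)) * h2eq'' - (8*(t 0)*R)*hRR
    have c1 : Lder u v z WV 1 = t 1 := by
        rw [Lder_apply]
        simp only [hWV, Matrix.cons_val_zero, Matrix.cons_val_one, Matrix.head_cons,
          Matrix.cons_val_two, Matrix.tail_cons,
          Complex.add_re, Complex.add_im, Complex.mul_re, Complex.mul_im,
          Complex.sub_re, Complex.sub_im, Complex.ofReal_re, Complex.ofReal_im,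
          Complex.I_re, Complex.I_im]
        rw [hB]
        ring_nf
    have c2 : Lder u v z WV 2 = t 2 := by
        rw [Lder_apply]
        simp only [hWV, Matrix.cons_val_zero, Matrix.cons_val_one, Matrix.head_cons,
          Matrix.cons_val_two, Matrix.tail_cons, map_add, map_mul, map_sub,
          Complex.conj_conj, Complex.conj_ofReal, Complex.conj_I,
          Complex.add_re, Complex.add_im, Complex.mul_re, Complex.mul_im,
          Complex.sub_re, Complex.sub_im, Complex.neg_re, Complex.neg_im,
          Complex.ofReal_re, Complex.ofReal_im,
          Complex.I_re, Complex.I_im, Complex.conj_re, Complex.conj_im]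
        field_simp
        linear_combination (4*R*(t 2) - 8*(t 0)*((z 0).re*(z 1).re - (z 0).im*(z 1).im))*h2eq''
          + (-(8*(t 0))*((z 0).re*(z 1).re - (z 0).im*(z 1).im) - 4*R*(t 2))*hRR
    refine ⟨WV, ?_⟩
    funext i
    fin_cases i
    · exact c0
    · exact c1
    · exact c2

  have hker3 : ∀ w : Fin 3 → ℂ, w ∈ LinearMap.ker ((fderiv ℝ (H14 u v) z : (Fin 3 → ℂ) →ₗ[ℝ] (Fin 3 → ℝ))) →
      ((((w 0).re*(z 1).re - (w 0).im*(z 1).im + (z 0).re*(w 1).re - (z 0).im*(w 1).im) + 2*((z 0).re^2+(z 0).im^2)*(fderiv ℝ u (pr14 z) (0, 1))*(w 2).re - (fderiv ℝ u (pr14 z) (1, 0))*((w 0).re*(z 1).im + (w 0).im*(z 1).re + (z 0).re*(w 1).im + (z 0).im*(w 1).re) = 0) ∧ ((w 2).im - (fderiv ℝ u (pr14 z) (1, 0))*(w 2).re - (fderiv ℝ u (pr14 z) (0, 1))*((w 0).re*(z 1).im + (w 0).im*(z 1).re + (z 0).re*(w 1).im + (z 0).im*(w 1).re) = 0) ∧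 ((z 0).re*(w 0).re + (z 0).im*(w 0).im - (z 1).re*(w 1).re - (z 1).im*(w 1).im = 0)) := by
    intro w hw
    have hw0 : fderiv ℝ (H14 u v) z w = 0 := LinearMap.mem_ker.mp hw
    rw [hfd, Lder_apply] at hw0
    have e0 := congrFun hw0 0
    have e1 := congrFun hw0 1
    have e2 := congrFun hw0 2
    simp only [Matrix.cons_val_zero, Matrix.cons_val_one, Matrix.head_cons,
      Matrix.cons_val_two, Matrix.tail_cons, Pi.zero_apply] at e0 e1 e2
    rw [hA] at e0
    rw [hB] at e1
    simp only [Complex.add_re, Complex.add_im, Complex.mul_re, Complex.mul_im,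
      Complex.sub_re, Complex.sub_im, Complex.neg_re, Complex.neg_im,
      Complex.ofReal_re, Complex.ofReal_im, Complex.I_re, Complex.I_im,
      Complex.conj_re, Complex.conj_im] at e0 e1 e2
    refine ⟨?_, ?_, ?_⟩
    · linear_combination e0 - 2*(fderiv ℝ u (pr14 z) (0, 1))*(w 2).re*hRR
    · linear_combination e1
    · linear_combination e2 / 2
  refine ⟨hL.differentiableAt, ?_, ?_, ?_, ?_⟩
  · rw [hfd]; exact hsurj
  · have h1 := LinearMap.finrank_range_add_finrank_ker
      ((fderiv ℝ (H14 u v) z) : (Fin 3 → ℂ) →ₗ[ℝ] (Fin 3 → ℝ))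
    have h2 : LinearMap.range ((fderiv ℝ (H14 u v) z) : (Fin 3 → ℂ) →ₗ[ℝ] (Fin 3 → ℝ)) = ⊤ := by
      rw [LinearMap.range_eq_top]
      rw [hfd]
      exact hsurj
    rw [h2] at h1
    have h3 : Module.finrank ℝ (Fin 3 → ℂ) = 6 := by
      simp [Module.finrank_pi_fintype, Complex.finrank_real_complex]
    have h4 : Module.finrank ℝ (⊤ : Submodule ℝ (Fin 3 → ℝ)) = 3 := by
      simp [finrank_top]
    have h5 : LinearMap.ker ((fderiv ℝ (H14 u v) z) : (Fin 3 → ℂ) →ₗ[ℝ] (Fin 3 → ℝ))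
        = LinearMap.ker ((fderiv ℝ (H14 u v) z : (Fin 3 → ℂ) →ₗ[ℝ] (Fin 3 → ℝ))) := rfl
    rw [h3, h4, h5] at h1
    omega
  · intro p hp q hq
    obtain ⟨hE1p, hE2p, hE3p⟩ := hker3 p hp
    obtain ⟨hE1q, hE2q, hE3q⟩ := hker3 q hq
    have key := sl_omega ((z 0).re)
        ((z 0).im)
        ((z 1).re)
        ((z 1).im)
        (fderiv ℝ u (pr14 z) (0, 1))
        (fderiv ℝ u (pr14 z) (1, 0))
        ((p 0).re)
        ((p 0).im)
        ((p 1).re)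
        ((p 1).im)
        ((p 2).re)
        ((p 2).im)
        ((q 0).re)
        ((q 0).im)
        ((q 1).re)
        ((q 1).im)
        ((q 2).re)
        ((q 2).im)
        (((z 0).re)*((p 0).im) - ((z 0).im)*((p 0).re) - ((z 1).re)*((p 1).im) + ((z 1).im)*((p 1).re))
        (((p 0).re)*((z 1).im) + ((p 0).im)*((z 1).re) + ((z 0).re)*((p 1).im) + ((z 0).im)*((p 1).re))
        ((p 2).re)
        (((z 0).re)*((q 0).im) - ((z 0).im)*((q 0).re) - ((z 1).re)*((q 1).im) + ((z 1).im)*((q 1).re))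
        (((q 0).re)*((z 1).im) + ((q 0).im)*((z 1).re) + ((z 0).re)*((q 1).im) + ((z 0).im)*((q 1).re))
        ((q 2).re)
        hane h2eq'
        (by linear_combination ((z 1).re)*hE1p + ((z 0).re)*hE3p - ((p 0).re)*h2eq')
        (by linear_combination (-((z 1).im))*hE1p + ((z 0).im)*hE3p - ((p 0).im)*h2eq')
        (by linear_combination ((z 0).re)*hE1p - ((z 1).re)*hE3p - ((p 1).re)*h2eq')
        (by linear_combination (-((z 0).im))*hE1p - ((z 1).im)*hE3p - ((p 1).im)*h2eq')
        (by ring)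
        (by linear_combination 2*(((z 0).re)^2+((z 0).im)^2)*hE2p)
        (by linear_combination ((z 1).re)*hE1q + ((z 0).re)*hE3q - ((q 0).re)*h2eq')
        (by linear_combination (-((z 1).im))*hE1q + ((z 0).im)*hE3q - ((q 0).im)*h2eq')
        (by linear_combination ((z 0).re)*hE1q - ((z 1).re)*hE3q - ((q 1).re)*h2eq')
        (by linear_combination (-((z 0).im))*hE1q - ((z 1).im)*hE3q - ((q 1).im)*h2eq')
        (by ring)
        (by linear_combination 2*(((z 0).re)^2+((z 0).im)^2)*hE2q)
    simp only [wC, Fin.sum_univ_three, Complex.add_im, Complex.mul_im,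
      Complex.conj_re, Complex.conj_im]
    linear_combination key
  · intro p hp q hq s hs
    obtain ⟨hE1p, hE2p, hE3p⟩ := hker3 p hp
    obtain ⟨hE1q, hE2q, hE3q⟩ := hker3 q hq
    obtain ⟨hE1s, hE2s, hE3s⟩ := hker3 s hs
    have key := sl_det ((z 0).re)
        ((z 0).im)
        ((z 1).re)
        ((z 1).im)
        (fderiv ℝ u (pr14 z) (0, 1))
        (fderiv ℝ u (pr14 z) (1, 0))
        ((p 0).re)
        ((p 0).im)
        ((p 1).re)
        ((p 1).im)
        ((p 2).re)
        ((p 2).im)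
        ((q 0).re)
        ((q 0).im)
        ((q 1).re)
        ((q 1).im)
        ((q 2).re)
        ((q 2).im)
        ((s 0).re)
        ((s 0).im)
        ((s 1).re)
        ((s 1).im)
        ((s 2).re)
        ((s 2).im)
        (((z 0).re)*((p 0).im) - ((z 0).im)*((p 0).re) - ((z 1).re)*((p 1).im) + ((z 1).im)*((p 1).re))
        (((p 0).re)*((z 1).im) + ((p 0).im)*((z 1).re) + ((z 0).re)*((p 1).im) + ((z 0).im)*((p 1).re))
        ((p 2).re)
        (((z 0).re)*((q 0).im) - ((z 0).im)*((q 0).re) - ((z 1).re)*((q 1).im) + ((z 1).im)*((q 1).re))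
        (((q 0).re)*((z 1).im) + ((q 0).im)*((z 1).re) + ((z 0).re)*((q 1).im) + ((z 0).im)*((q 1).re))
        ((q 2).re)
        (((z 0).re)*((s 0).im) - ((z 0).im)*((s 0).re) - ((z 1).re)*((s 1).im) + ((z 1).im)*((s 1).re))
        (((s 0).re)*((z 1).im) + ((s 0).im)*((z 1).re) + ((z 0).re)*((s 1).im) + ((z 0).im)*((s 1).re))
        ((s 2).re)
        hane
        (by linear_combination ((z 1).re)*hE1p + ((z 0).re)*hE3p - ((p 0).re)*h2eq')
        (by linear_combination (-((z 1).im))*hE1p + ((z 0).im)*hE3p - ((p 0).im)*h2eq')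
        (by linear_combination ((z 0).re)*hE1p - ((z 1).re)*hE3p - ((p 1).re)*h2eq')
        (by linear_combination (-((z 0).im))*hE1p - ((z 1).im)*hE3p - ((p 1).im)*h2eq')
        (by ring)
        (by linear_combination 2*(((z 0).re)^2+((z 0).im)^2)*hE2p)
        (by linear_combination ((z 1).re)*hE1q + ((z 0).re)*hE3q - ((q 0).re)*h2eq')
        (by linear_combination (-((z 1).im))*hE1q + ((z 0).im)*hE3q - ((q 0).im)*h2eq')
        (by linear_combination ((z 0).re)*hE1q - ((z 1).re)*hE3q - ((q 1).re)*h2eq')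
        (by linear_combination (-((z 0).im))*hE1q - ((z 1).im)*hE3q - ((q 1).im)*h2eq')
        (by ring)
        (by linear_combination 2*(((z 0).re)^2+((z 0).im)^2)*hE2q)
        (by linear_combination ((z 1).re)*hE1s + ((z 0).re)*hE3s - ((s 0).re)*h2eq')
        (by linear_combination (-((z 1).im))*hE1s + ((z 0).im)*hE3s - ((s 0).im)*h2eq')
        (by linear_combination ((z 0).re)*hE1s - ((z 1).re)*hE3s - ((s 1).re)*h2eq')
        (by linear_combination (-((z 0).im))*hE1s - ((z 1).im)*hE3s - ((s 1).im)*h2eq')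
        (by ring)
        (by linear_combination 2*(((z 0).re)^2+((z 0).im)^2)*hE2s)
    simp only [OmC, Matrix.det_fin_three, Matrix.of_apply,
      Matrix.cons_val_zero, Matrix.cons_val_one, Matrix.head_cons,
      Matrix.cons_val_two, Matrix.tail_cons,
      Complex.add_im, Complex.add_re, Complex.sub_im, Complex.sub_re,
      Complex.mul_im, Complex.mul_re]
    linear_combination key
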